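/- arXiv:2410.16584 — 6 statements merged into one kernel-verified Lean document; each statement's English description precedes it below -/
import Mathlib

section
/- Let p ≥ 1 be an odd integer, h an integer coprime to p, and ζ = e^{2πi/p}. Then the sawtooth value ((h/p)) equals (i/(2p)) · Σ_{n=1}^{p−1} cot(πn/p) · ζ^{hn}. -/
/-!
With `w = ζ ^ n ≠ 1` one has `cot (π n / p) = i (w + 1) / (w - 1)`, and differentiating the
geometric series gives `(w + 1) / (w - 1) = 1 + (2 / p) ∑_{k < p} k w ^ k` for `w ^ p = 1`.
Substituting this and summing over `n` first, orthogonality of the characters `n ↦ ζ ^ (m n)`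
keeps only the index `k ≡ -h (mod p)`, so that `∑_n (w + 1) / (w - 1) ζ ^ (h n)` equals
`p - 2 (h mod p) = -2p ((h/p))` when `p ∤ h` and vanishes otherwise.
-/

open Real Complex

/-- The sawtooth function: `((r)) = 0` if `r ∈ ℤ`, else `r − ⌊r⌋ − 1/2`. -/
noncomputable def sawtooth (r : ℝ) : ℝ :=
  if Int.fract r = 0 then 0 else r - ⌊r⌋ - 1 / 2

open Finset

theorem sawtooth_intCast_div (h : ℤ) {p : ℕ} (hp : p ≠ 0) :
    sawtooth (h / p) = if h % p = 0 then 0 else ((h % p : ℤ) : ℝ) / p - 1 / 2 := by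
  rw [sawtooth, Int.self_sub_floor, Int.fract_div_intCast_eq_div_intCast_mod]
  simp only [div_eq_zero_iff, Int.cast_eq_zero, Nat.cast_eq_zero, hp, or_false]

theorem Complex.ofReal_cos_div_sin (x : ℝ) :
    ((Real.cos x / Real.sin x : ℝ) : ℂ) = I * (exp (2 * I * x) + 1) / (exp (2 * I * x) - 1) := by
  rw [← Real.cot_eq_cos_div_sin, ofReal_cot, cot_eq_exp_ratio, ← neg_sub (exp _), mul_neg,
    div_neg, mul_comm I, ← div_div, div_I]
  ring

theorem Nat.sum_range_ite_dvd_add {p a : ℕ} (ha : a < p) :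
    ∑ k ∈ range p, (if p ∣ k + a then k else 0) = if a = 0 then 0 else p - a := by
  split_ifs with ha0
  · subst ha0
    refine sum_eq_zero fun k hk => ?_
    simp only [add_zero, ite_eq_right_iff]
    exact fun hdvd => Nat.eq_zero_of_dvd_of_lt hdvd (mem_range.1 hk)
  · rw [sum_eq_single (p - a)]
    · rw [if_pos (by rw [Nat.sub_add_cancel ha.le])]
    · intro k hk hne
      rw [if_neg]
      intro hdvd
      have := Nat.eq_of_dvd_of_lt_two_mul (by omega) hdvd (by rw [mem_range] at hk; omega)
      omega
    · rw [mem_range]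
      omega

section RootsOfUnity

variable {K : Type*} [Field K] {p : ℕ}

theorem sum_range_natCast_mul_pow_mul_sub_one {x : K} (hx : x ≠ 1) (hxp : x ^ p = 1) :
    (∑ k ∈ range p, (k : K) * x ^ k) * (x - 1) = p := by
  have hgeom : ∑ k ∈ range p, x ^ k = 0 := by rw [geom_sum_eq hx, hxp, sub_self, zero_div]
  calc (∑ k ∈ range p, (k : K) * x ^ k) * (x - 1)
      = ∑ k ∈ range p, (((k + 1 : ℕ) : K) * x ^ (k + 1) - (k : K) * x ^ k - x * x ^ k) := by
        rw [sum_mul]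
        refine sum_congr rfl fun k _ => ?_
        push_cast
        ring
    _ = p := by
        rw [sum_sub_distrib, sum_range_sub (fun k => (k : K) * x ^ k), ← mul_sum, hxp, hgeom]
        simp

theorem add_one_div_sub_one_eq_sum_range [CharZero K] (hp : p ≠ 0) {x : K} (hx : x ≠ 1)
    (hxp : x ^ p = 1) :
    (x + 1) / (x - 1) = 1 + 2 / p * ∑ k ∈ range p, (k : K) * x ^ k := by
  have hsum := sum_range_natCast_mul_pow_mul_sub_one hx hxp
  have hx' : x - 1 ≠ 0 := sub_ne_zero.2 hx
  field_simp
  linear_combination -2 * hsum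

variable {z : K}

theorem IsPrimitiveRoot.zpow_emod (hz : IsPrimitiveRoot z p) (hp : p ≠ 0) (m : ℤ) :
    z ^ (m % p) = z ^ m := by
  conv_rhs => rw [← Int.emod_add_mul_ediv m p]
  rw [zpow_add₀ (hz.ne_zero hp), zpow_mul, hz.zpow_eq_one, one_zpow, mul_one]

theorem IsPrimitiveRoot.sum_Icc_pow_mul (hz : IsPrimitiveRoot z p) (hp : p ≠ 0) (m : ℕ) :
    ∑ n ∈ Icc 1 (p - 1), z ^ (m * n) = (if p ∣ m then (p : K) else 0) - 1 := by
  have hrange : range p = insert 0 (Icc 1 (p - 1)) := by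
    ext n
    simp only [mem_range, mem_insert, mem_Icc]
    omega
  have hsum : ∑ n ∈ range p, z ^ (m * n) = if p ∣ m then (p : K) else 0 := by
    simp_rw [pow_mul]
    split_ifs with hm
    · simp [(hz.pow_eq_one_iff_dvd m).2 hm]
    · rw [geom_sum_eq (mt (hz.pow_eq_one_iff_dvd m).1 hm), ← pow_mul, mul_comm, pow_mul,
        hz.pow_eq_one, one_pow, sub_self, zero_div]
  rw [← hsum, hrange, sum_insert (by simp), mul_zero, pow_zero, add_sub_cancel_left]

theorem IsPrimitiveRoot.sum_Icc_div_sub_one_mul_pow [CharZero K] (hz : IsPrimitiveRoot z p)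
    {a : ℕ} (ha : a < p) :
    ∑ n ∈ Icc 1 (p - 1), (z ^ n + 1) / (z ^ n - 1) * z ^ (a * n)
      = if a = 0 then 0 else (p : K) - 2 * a := by
  have hp : p ≠ 0 := by omega
  have hexpand : ∀ n ∈ Icc 1 (p - 1), (z ^ n + 1) / (z ^ n - 1) * z ^ (a * n)
      = z ^ (a * n) + 2 / p * ∑ k ∈ range p, (k : K) * z ^ ((k + a) * n) := by
    intro n hn
    obtain ⟨hn1, hnp⟩ := mem_Icc.1 hn
    have hzn : (z ^ n) ^ p = 1 := by rw [← pow_mul, mul_comm, pow_mul, hz.pow_eq_one, one_pow]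
    rw [add_one_div_sub_one_eq_sum_range hp (hz.pow_ne_one_of_pos_of_lt (by omega) (by omega)) hzn,
      add_mul, one_mul, mul_assoc, sum_mul]
    congr 2
    exact sum_congr rfl fun k _ => by ring
  have hweights : ∑ k ∈ range p, (k : K) * ((if p ∣ k + a then (p : K) else 0) - 1)
      = p * (if a = 0 then 0 else ((p - a : ℕ) : K)) - ∑ k ∈ range p, (k : K) := by
    have hcount := congrArg (Nat.cast : ℕ → K) (Nat.sum_range_ite_dvd_add ha)
    push_cast [Nat.cast_ite, Nat.cast_sum] at hcount
    rw [← hcount, mul_sum, ← sum_sub_distrib]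
    exact sum_congr rfl fun k _ => by split_ifs <;> ring
  have hgauss : (∑ k ∈ range p, (k : K)) * 2 = p * (p - 1) := by
    have := congrArg (Nat.cast : ℕ → K) (sum_range_id_mul_two p)
    push_cast [Nat.cast_sub (Nat.one_le_iff_ne_zero.2 hp)] at this
    exact this
  have hdvd : p ∣ a ↔ a = 0 := ⟨fun h => Nat.eq_zero_of_dvd_of_lt h ha, fun h => h ▸ dvd_zero p⟩
  have hpK : (p : K) ≠ 0 := Nat.cast_ne_zero.2 hp
  rw [sum_congr rfl hexpand, sum_add_distrib, ← mul_sum, sum_comm]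
  simp_rw [← mul_sum, hz.sum_Icc_pow_mul hp]
  rw [hweights]
  simp only [hdvd]
  split_ifs
  · field_simp
    linear_combination -hgauss
  · push_cast [Nat.cast_sub ha.le]
    field_simp
    linear_combination -hgauss

theorem IsPrimitiveRoot.sum_Icc_div_sub_one_mul_zpow [CharZero K] (hz : IsPrimitiveRoot z p)
    (hp : p ≠ 0) (h : ℤ) :
    ∑ n ∈ Icc 1 (p - 1), (z ^ n + 1) / (z ^ n - 1) * z ^ (h * n)
      = if h % p = 0 then 0 else (p : K) - 2 * (h % p : ℤ) := by
  have hmod : 0 ≤ h % p ∧ h % p < p :=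
    ⟨Int.emod_nonneg h (by omega), Int.emod_lt_of_pos h (by omega)⟩
  obtain ⟨a, ha⟩ : ∃ a : ℕ, (a : ℤ) = h % p := ⟨_, Int.toNat_of_nonneg hmod.1⟩
  have hpow : ∀ n : ℕ, z ^ (h * n) = z ^ (a * n) := fun n => by
    rw [zpow_mul, ← hz.zpow_emod hp, ← ha, zpow_natCast, zpow_natCast, pow_mul]
  simp_rw [hpow, hz.sum_Icc_div_sub_one_mul_pow (a := a) (by omega), ← ha]
  simp

end RootsOfUnity

theorem stmt_2_general (p : ℕ) (h : ℤ) (hp : 1 ≤ p) :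
    (sawtooth ((h : ℝ) / p) : ℂ)
      = Complex.I / (2 * p) *
        ∑ n ∈ Finset.Icc 1 (p - 1),
          ((Real.cos (Real.pi * n / p) / Real.sin (Real.pi * n / p) : ℝ) : ℂ) *
            Complex.exp (2 * Real.pi * Complex.I / p) ^ (h * n) := by
  have hp0 : p ≠ 0 := by omega
  set ζ := Complex.exp (2 * Real.pi * Complex.I / p)
  have hζ : IsPrimitiveRoot ζ p := Complex.isPrimitiveRoot_exp p hp0
  have hcot : ∀ n : ℕ, ((Real.cos (Real.pi * n / p) / Real.sin (Real.pi * n / p) : ℝ) : ℂ)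
      = I * ((ζ ^ n + 1) / (ζ ^ n - 1)) := fun n => by
    rw [ofReal_cos_div_sin, ← Complex.exp_nat_mul, mul_div_assoc]
    push_cast
    ring_nf
  simp_rw [hcot, mul_assoc, ← mul_sum]
  rw [hζ.sum_Icc_div_sub_one_mul_zpow hp0, sawtooth_intCast_div h hp0]
  have hpC : (p : ℂ) ≠ 0 := Nat.cast_ne_zero.2 hp0
  split_ifs
  · simp
  · push_cast
    field_simp
    linear_combination (2 * (h % p : ℤ) - (p : ℂ)) * I_sq

/-- For odd `p ≥ 1`, `h` coprime to `p`, and `ζ = e^{2πi/p}`: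
`((h/p)) = (i/(2p)) ∑_{n=1}^{p-1} cot(πn/p) ζ^{hn}`. -/
theorem stmt_2 (p : ℕ) (h : ℤ) (hp : 1 ≤ p) (hodd : Odd p)
    (hco : Int.gcd h (p : ℤ) = 1) :
    (sawtooth ((h : ℝ) / p) : ℂ)
      = Complex.I / (2 * p) *
        ∑ n ∈ Finset.Icc 1 (p - 1),
          ((Real.cos (Real.pi * n / p) / Real.sin (Real.pi * n / p) : ℝ) : ℂ) *
            Complex.exp (2 * Real.pi * Complex.I / p) ^ (h * n) :=
  stmt_2_general p h hp
end

section
/- Let p be an odd positive integer and q an integer coprime to p. Then the Dedekind–Rademacher sum s(q, p; 1/2, 0) = Σ_{h mod p} ((h/p)) · (((qh)/p + 1/2)) equals (1/(4p)) · Σ_{ℓ=1}^{p−1} (−1)^ℓ · csc(πℓ/p) · cot(πqℓ/p). -/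
open Real

/-- The Dedekind–Rademacher sum `s(q, p; 1/2, 0) = ∑_{h mod p} ((h/p))((qh/p + 1/2))`. -/
noncomputable def dedekindRademacherSum (q : ℤ) (p : ℕ) : ℝ :=
  ∑ h ∈ Finset.range p, sawtooth ((h : ℝ) / p) * sawtooth ((q : ℝ) * h / p + 1 / 2)

/-!
Both factors are expanded in finite Fourier series over `ZMod p`, with `ζ^ℓ = ψ ℓ` for a primitive
additive character `ψ`. The sum `∑_ℓ ζ^{ℓ(k+1)} / (1 - ζ^ℓ)` equals `(k mod p) - (p - 1)/2`: it
grows by one with `k` except across multiples of `p`, and pairing `ℓ` with `-ℓ` gives its value at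
`k = 0`. Since `((x)) = (fract x - fract (-x)) / 2`, this yields
`((k/p)) = (2p)⁻¹ ∑_ℓ (1 + ζ^ℓ)/(1 - ζ^ℓ) ζ^{ℓk}`. Hermite's identity `⌊x⌋ + ⌊x + 1/2⌋ = ⌊2x⌋`
gives `((x + 1/2)) = ((2x)) - ((x))`, and as `2` is invertible modulo the odd `p` the shifted factor
has coefficients `2 ζ^{ℓ/2} / (1 - ζ^ℓ)`. Orthogonality of characters reduces the sum over `h` of
the product of the two expansions to a single sum over `m`, and for `ζ = e^{2πi/p}` the surviving
coefficients are `-i cot (πqm/p)` and `i (-1)^m csc (πm/p)`.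
-/

open Finset

theorem inv_div_one_sub_inv {F : Type*} [Field F] {u : F} (hu : u ≠ 0) :
    u⁻¹ / (1 - u⁻¹) = 1 / (u - 1) := by
  rw [← mul_div_mul_left _ _ hu, mul_inv_cancel₀ hu, mul_sub, mul_one, mul_inv_cancel₀ hu]

theorem one_add_div_one_sub_mul_eq {F : Type*} [Field F] (u v : F) :
    (1 + u) / (1 - u) * v = u * v / (1 - u) - v / (u - 1) := by
  by_cases hu : u = 1
  · simp [hu]
  · have h₁ : 1 - u ≠ 0 := sub_ne_zero.mpr (Ne.symm hu)
    have h₂ : u - 1 ≠ 0 := sub_ne_zero.mpr hu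
    field_simp
    ring

theorem one_add_div_one_sub_sub_one_add_sq_div {F : Type*} [Field F] (u : F) :
    (1 + u) / (1 - u) - (1 + u ^ 2) / (1 - u ^ 2) = 2 * u / (1 - u ^ 2) := by
  by_cases h₁ : u = 1
  · simp [h₁]
  by_cases h₂ : u = -1
  · simp [h₂]
  have h₃ : 1 - u ≠ 0 := sub_ne_zero.mpr (Ne.symm h₁)
  have h₄ : 1 + u ≠ 0 := fun h => h₂ (by linear_combination h)
  have h₅ : 1 - u ^ 2 ≠ 0 := by
    rw [show 1 - u ^ 2 = (1 - u) * (1 + u) by ring]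
    exact mul_ne_zero h₃ h₄
  field_simp
  ring

section Floor

variable {K : Type*} [Field K] [LinearOrder K] [IsStrictOrderedRing K] [FloorRing K]

theorem Int.floor_add_floor_add_half (x : K) : ⌊x⌋ + ⌊x + 1 / 2⌋ = ⌊2 * x⌋ := by
  have hx : Int.fract x = x - ⌊x⌋ := rfl
  have h0 := Int.fract_nonneg x
  have h1 := Int.fract_lt_one x
  obtain h | h := lt_or_ge (Int.fract x) (1 / 2)
  · have : ⌊x + 1 / 2⌋ = ⌊x⌋ := Int.floor_eq_iff.mpr ⟨by linarith, by linarith⟩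
    rw [this, eq_comm, Int.floor_eq_iff]
    push_cast
    constructor <;> linarith
  · have : ⌊x + 1 / 2⌋ = ⌊x⌋ + 1 :=
      Int.floor_eq_iff.mpr ⟨by push_cast; linarith, by push_cast; linarith⟩
    rw [this, eq_comm, Int.floor_eq_iff]
    push_cast
    constructor <;> linarith

theorem Int.fract_add_fract_add_half (x : K) :
    Int.fract x + Int.fract (x + 1 / 2) = Int.fract (2 * x) + 1 / 2 := by
  have h : ((⌊x⌋ + ⌊x + 1 / 2⌋ : ℤ) : K) = ⌊2 * x⌋ := congrArg _ (Int.floor_add_floor_add_half x)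
  push_cast at h
  unfold Int.fract
  linear_combination -h

end Floor

theorem sawtooth_eq_fract_sub_fract_neg (x : ℝ) :
    sawtooth x = (Int.fract x - Int.fract (-x)) / 2 := by
  unfold sawtooth
  split_ifs with h
  · rw [h, Int.fract_neg_eq_zero.mpr h]
    ring
  · rw [Int.fract_neg h, ← Int.self_sub_floor]
    ring

theorem sawtooth_add_sawtooth_add_half (x : ℝ) :
    sawtooth x + sawtooth (x + 1 / 2) = sawtooth (2 * x) := by
  have h₁ := Int.fract_add_fract_add_half x
  have h₂ := Int.fract_add_fract_add_half (-(x + 1 / 2))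
  rw [show -(x + 1 / 2) + 1 / 2 = -x by ring, show 2 * -(x + 1 / 2) = -(2 * x) - 1 by ring,
    Int.fract_sub_one, neg_add'] at h₂
  simp only [sawtooth_eq_fract_sub_fract_neg, neg_add']
  linear_combination (h₁ - h₂) / 2

theorem ZMod.sum_eq_sum_range {M : Type*} [AddCommMonoid M] {p : ℕ} [NeZero p]
    (f : ZMod p → M) : ∑ x, f x = ∑ m ∈ range p, f m :=
  Finset.sum_nbij' ZMod.val (fun m => (m : ZMod p)) (fun x _ => mem_range.mpr (ZMod.val_lt x))
    (fun _ _ => mem_univ _) (fun x _ => ZMod.natCast_zmod_val x)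
    (fun _ hm => ZMod.val_cast_of_lt (mem_range.mp hm)) (fun x _ => by rw [ZMod.natCast_zmod_val])

theorem ZMod.sum_eq_sum_Icc {M : Type*} [AddCommMonoid M] {p : ℕ} [NeZero p] {f : ZMod p → M}
    (hf : f 0 = 0) : ∑ x, f x = ∑ m ∈ Icc 1 (p - 1), f m := by
  rw [ZMod.sum_eq_sum_range]
  refine (sum_subset (fun m hm => ?_) fun m hmp hm => ?_).symm
  · simp only [mem_Icc, mem_range] at hm ⊢
    omega
  · obtain rfl : m = 0 := by simp only [mem_Icc, mem_range] at hm hmp; omega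
    simpa using hf

theorem ZMod.two_mul_natCast_eq_one {p S : ℕ} (hS : 2 * S = p + 1) : 2 * (S : ZMod p) = 1 := by
  simpa using congrArg (Nat.cast : ℕ → ZMod p) hS

section CharacterSums

variable {p : ℕ} {F : Type*} [Field F] {ψ : AddChar (ZMod p) F}

/-- Fourier coefficients of `k ↦ ((k / p))` (see `sawtooth_intCast_div`); the junk value
`x / 0 = 0` makes the one at `ℓ = 0` vanish. -/
def sawtoothCoeff (ψ : AddChar (ZMod p) F) (ℓ : ZMod p) : F :=
  (1 + ψ ℓ) / (1 - ψ ℓ)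

theorem sawtoothCoeff_mul_sub_sawtoothCoeff {h : ZMod p} (hh : 2 * h = 1) (ℓ : ZMod p) :
    sawtoothCoeff ψ (h * ℓ) - sawtoothCoeff ψ ℓ = 2 * ψ (h * ℓ) / (1 - ψ ℓ) := by
  have hsq : ψ (h * ℓ) ^ 2 = ψ ℓ := by
    rw [← AddChar.map_nsmul_eq_pow, nsmul_eq_mul, Nat.cast_ofNat, ← mul_assoc, hh, one_mul]
  rw [sawtoothCoeff, sawtoothCoeff, ← hsq, one_add_div_one_sub_sub_one_add_sq_div]

variable [NeZero p]

theorem sum_div_one_sub [NeZero (2 : F)] (hψ : ψ.IsPrimitive) :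
    ∑ ℓ, ψ ℓ / (1 - ψ ℓ) = -((p - 1) / 2) := by
  have hpair : ∀ ℓ, ψ ℓ / (1 - ψ ℓ) + ψ (-ℓ) / (1 - ψ (-ℓ)) = (if ℓ = 0 then 1 else 0) - 1 := by
    intro ℓ
    rw [AddChar.map_neg_eq_inv, inv_div_one_sub_inv (ψ.val_isUnit ℓ).ne_zero]
    split_ifs with hℓ
    · simp [hℓ]
    · have : 1 - ψ ℓ ≠ 0 := sub_ne_zero.mpr (Ne.symm ((hψ.zmod_char_eq_one_iff p ℓ).not.mpr hℓ))
      have : ψ ℓ - 1 ≠ 0 := sub_ne_zero.mpr ((hψ.zmod_char_eq_one_iff p ℓ).not.mpr hℓ)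
      field_simp
      ring
  have hneg : ∑ ℓ, ψ (-ℓ) / (1 - ψ (-ℓ)) = ∑ ℓ, ψ ℓ / (1 - ψ ℓ) :=
    Equiv.sum_comp (Equiv.neg (ZMod p)) fun ℓ => ψ ℓ / (1 - ψ ℓ)
  have hsum := Finset.sum_congr rfl fun ℓ (_ : ℓ ∈ univ) => hpair ℓ
  rw [sum_add_distrib, hneg, sum_sub_distrib,
    sum_ite_eq', if_pos (mem_univ _), sum_const, card_univ, ZMod.card, nsmul_one] at hsum
  field_simp
  linear_combination hsum

theorem sum_mul_add_one_div_one_sub_sub (hψ : ψ.IsPrimitive) (k : ZMod p) :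
    ∑ ℓ, ψ (ℓ * (k + 1)) / (1 - ψ ℓ) - ∑ ℓ, ψ (ℓ * k) / (1 - ψ ℓ)
      = 1 - if k = 0 then (p : F) else 0 := by
  have hterm : ∀ ℓ, ψ (ℓ * (k + 1)) / (1 - ψ ℓ) - ψ (ℓ * k) / (1 - ψ ℓ)
      = (if ℓ = 0 then 1 else 0) - ψ (ℓ * k) := by
    intro ℓ
    split_ifs with hℓ
    · simp [hℓ]
    · have : 1 - ψ ℓ ≠ 0 := sub_ne_zero.mpr (Ne.symm ((hψ.zmod_char_eq_one_iff p ℓ).not.mpr hℓ))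
      rw [mul_add_one, AddChar.map_add_eq_mul]
      field_simp
      ring
  rw [← sum_sub_distrib, sum_congr rfl fun ℓ _ => hterm ℓ, sum_sub_distrib, sum_ite_eq',
    if_pos (mem_univ _), AddChar.sum_mulShift k hψ, ZMod.card, Nat.cast_ite, Nat.cast_zero]

theorem sum_mul_natCast_add_one_div_one_sub [NeZero (2 : F)] (hψ : ψ.IsPrimitive) {r : ℕ}
    (hr : r < p) : ∑ ℓ, ψ (ℓ * (r + 1)) / (1 - ψ ℓ) = r - (p - 1) / 2 := by
  induction r with
  | zero => simpa [sub_eq_add_neg, neg_div] using sum_div_one_sub hψ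
  | succ r ih =>
    have hr0 : ((r + 1 : ℕ) : ZMod p) ≠ 0 := by
      rw [Ne, ZMod.natCast_eq_zero_iff]
      exact Nat.not_dvd_of_pos_of_lt r.succ_pos hr
    have hstep := sum_mul_add_one_div_one_sub_sub hψ ((r + 1 : ℕ) : ZMod p)
    push_cast at hstep ⊢
    rw [if_neg (by exact_mod_cast hr0), ih (by omega)] at hstep
    linear_combination hstep

theorem sum_fourier_mul_fourier_dilate (hψ : ψ.IsPrimitive) (α β : ZMod p → F) (q : ZMod p) :
    ∑ x, (∑ ℓ, α ℓ * ψ (ℓ * x)) * (∑ j, β j * ψ (j * (q * x)))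
      = p * ∑ j, α (-(q * j)) * β j := by
  calc ∑ x, (∑ ℓ, α ℓ * ψ (ℓ * x)) * (∑ j, β j * ψ (j * (q * x)))
      = ∑ ℓ, ∑ j, α ℓ * β j * ∑ x, ψ (x * (ℓ + q * j)) := by
        simp_rw [sum_mul_sum, mul_sum]
        rw [sum_comm]
        refine sum_congr rfl fun ℓ _ => ?_
        rw [sum_comm]
        refine sum_congr rfl fun j _ => sum_congr rfl fun x _ => ?_
        rw [mul_add, AddChar.map_add_eq_mul]
        ring_nf
    _ = ∑ j, ∑ ℓ, if ℓ = -(q * j) then p * (α ℓ * β j) else 0 := by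
        rw [sum_comm]
        refine sum_congr rfl fun j _ => sum_congr rfl fun ℓ _ => ?_
        simp only [AddChar.sum_mulShift _ hψ, ZMod.card, ← eq_neg_iff_add_eq_zero]
        split_ifs <;> simp [mul_comm]
    _ = p * ∑ j, α (-(q * j)) * β j := by
        simp_rw [sum_ite_eq', if_pos (mem_univ _), mul_sum]

end CharacterSums

section Sawtooth

variable {p : ℕ} [NeZero p] {ψ : AddChar (ZMod p) ℂ}

theorem sum_mul_intCast_add_one_div_one_sub (hψ : ψ.IsPrimitive) (k : ℤ) :
    ∑ ℓ, ψ (ℓ * (k + 1)) / (1 - ψ ℓ) = p * Int.fract ((k : ℝ) / p) - (p - 1) / 2 := by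
  have hp : (0 : ℤ) < p := by exact_mod_cast NeZero.pos p
  obtain ⟨r, hr⟩ : ∃ r : ℕ, (r : ℤ) = k % p :=
    ⟨_, Int.toNat_of_nonneg (Int.emod_nonneg k hp.ne')⟩
  have hrp : r < p := by have := Int.emod_lt_of_pos k hp; omega
  have hk : (k : ZMod p) = r := by rw [← ZMod.intCast_mod, ← hr, Int.cast_natCast]
  rw [hk, sum_mul_natCast_add_one_div_one_sub hψ hrp, Int.fract_div_intCast_eq_div_intCast_mod,
    ← hr]
  have : (p : ℂ) ≠ 0 := NeZero.ne _
  push_cast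
  field_simp

theorem sawtooth_intCast_div_s8 (hψ : ψ.IsPrimitive) (k : ℤ) :
    (sawtooth ((k : ℝ) / p) : ℂ) = (∑ ℓ, sawtoothCoeff ψ ℓ * ψ (ℓ * k)) / (2 * p) := by
  have h₁ := sum_mul_intCast_add_one_div_one_sub hψ k
  have h₂ := sum_mul_intCast_add_one_div_one_sub hψ (-k)
  have hneg : ∑ ℓ, ψ (ℓ * ((-k : ℤ) + 1)) / (1 - ψ ℓ) = ∑ ℓ, ψ (ℓ * k) / (ψ ℓ - 1) := by
    rw [← Equiv.sum_comp (Equiv.neg (ZMod p))]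
    refine sum_congr rfl fun ℓ _ => ?_
    rw [Equiv.neg_apply, show -ℓ * ((-k : ℤ) + 1) = ℓ * k + -ℓ by push_cast; ring,
      AddChar.map_add_eq_mul, AddChar.map_neg_eq_inv, mul_div_assoc,
      inv_div_one_sub_inv (ψ.val_isUnit ℓ).ne_zero, mul_one_div]
  have hcoeff : ∑ ℓ, sawtoothCoeff ψ ℓ * ψ (ℓ * k)
      = ∑ ℓ, ψ (ℓ * (k + 1)) / (1 - ψ ℓ) - ∑ ℓ, ψ (ℓ * k) / (ψ ℓ - 1) := by
    rw [← sum_sub_distrib]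
    refine sum_congr rfl fun ℓ _ => ?_
    rw [sawtoothCoeff, one_add_div_one_sub_mul_eq, mul_add_one, AddChar.map_add_eq_mul, mul_comm]
  rw [hcoeff, ← hneg, h₁, h₂, sawtooth_eq_fract_sub_fract_neg, ← neg_div, ← Int.cast_neg]
  have : (p : ℂ) ≠ 0 := NeZero.ne _
  push_cast
  field_simp
  ring

theorem sawtooth_intCast_div_add_half (hψ : ψ.IsPrimitive) {h : ZMod p} (hh : 2 * h = 1)
    (k : ℤ) : (sawtooth ((k : ℝ) / p + 1 / 2) : ℂ)
      = (∑ ℓ, (sawtoothCoeff ψ (h * ℓ) - sawtoothCoeff ψ ℓ) * ψ (ℓ * k)) / (2 * p) := by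
  have hdup := sawtooth_add_sawtooth_add_half ((k : ℝ) / p)
  rw [show 2 * ((k : ℝ) / p) = ((2 * k : ℤ) : ℝ) / p by push_cast; ring] at hdup
  have hdouble : ∑ ℓ, sawtoothCoeff ψ ℓ * ψ (ℓ * ((2 * k : ℤ) : ZMod p))
      = ∑ ℓ, sawtoothCoeff ψ (h * ℓ) * ψ (ℓ * k) := by
    let two : (ZMod p)ˣ := ⟨2, h, hh, by rw [mul_comm, hh]⟩
    rw [← Equiv.sum_comp (Units.mulLeft two) fun ℓ => sawtoothCoeff ψ (h * ℓ) * ψ (ℓ * k)]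
    refine sum_congr rfl fun ℓ _ => ?_
    rw [Units.mulLeft_apply, show ((two : (ZMod p)ˣ) : ZMod p) = 2 from rfl, ← mul_assoc,
      mul_comm h, hh, one_mul]
    push_cast
    ring_nf
  rw [eq_sub_of_add_eq' hdup, Complex.ofReal_sub, sawtooth_intCast_div_s8 hψ,
    sawtooth_intCast_div_s8 hψ, hdouble, ← sub_div, ← sum_sub_distrib]
  simp_rw [sub_mul]

theorem dedekindRademacherSum_eq_sum_sawtoothCoeff (hψ : ψ.IsPrimitive) {h : ZMod p}
    (hh : 2 * h = 1) (q : ℤ) :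
    (dedekindRademacherSum q p : ℂ)
      = (∑ j, sawtoothCoeff ψ (-(q * j)) * (sawtoothCoeff ψ (h * j) - sawtoothCoeff ψ j))
          / (4 * p) := by
  have hp : (p : ℂ) ≠ 0 := NeZero.ne _
  calc (dedekindRademacherSum q p : ℂ)
      = (∑ x : ZMod p, (∑ ℓ, sawtoothCoeff ψ ℓ * ψ (ℓ * x)) *
          ∑ j, (sawtoothCoeff ψ (h * j) - sawtoothCoeff ψ j) * ψ (j * (q * x))) / (4 * p ^ 2) := by
        rw [dedekindRademacherSum, Complex.ofReal_sum, ZMod.sum_eq_sum_range, sum_div]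
        refine sum_congr rfl fun n _ => ?_
        have h₁ := sawtooth_intCast_div_s8 hψ n
        have h₂ := sawtooth_intCast_div_add_half hψ hh (q * n)
        push_cast at h₁ h₂
        rw [Complex.ofReal_mul, h₁, h₂]
        field_simp
        ring
    _ = _ := by
        rw [sum_fourier_mul_fourier_dilate hψ]
        field_simp

end Sawtooth

section Trigonometric

variable {p : ℕ} [NeZero p]

theorem sawtoothCoeff_stdAddChar_intCast (j : ℤ) :
    sawtoothCoeff ZMod.stdAddChar (j : ZMod p)
      = Complex.I * (Complex.cos (π * j / p) / Complex.sin (π * j / p)) := by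
  rw [sawtoothCoeff, ZMod.stdAddChar_coe, ← Complex.cot_eq_cos_div_sin, Complex.cot_eq_exp_ratio,
    show 2 * Complex.I * (π * j / p) = 2 * π * Complex.I * j / p by ring, ← mul_div_assoc,
    mul_div_mul_left _ _ Complex.I_ne_zero, add_comm]

theorem sawtoothCoeff_stdAddChar_half_mul_sub {S : ℕ} (hS : 2 * S = p + 1) (m : ℕ) :
    sawtoothCoeff ZMod.stdAddChar ((S : ZMod p) * (m : ZMod p))
        - sawtoothCoeff ZMod.stdAddChar (m : ZMod p)
      = Complex.I * (-1) ^ m / Complex.sin (π * m / p) := by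
  have hp : (p : ℂ) ≠ 0 := NeZero.ne _
  set w := Complex.exp (π * m / p * Complex.I)
  have hw : w ≠ 0 := Complex.exp_ne_zero _
  have hhalf : ZMod.stdAddChar ((S : ZMod p) * (m : ZMod p)) = (-1) ^ m * w := by
    rw [← Complex.exp_pi_mul_I, ← Complex.exp_nat_mul, ← Complex.exp_add,
      show (S : ZMod p) * (m : ZMod p) = ((S * m : ℕ) : ℤ) by push_cast; rfl,
      ZMod.stdAddChar_coe]
    congr 1
    have hSC : 2 * (S : ℂ) = p + 1 := by exact_mod_cast hS
    push_cast
    rw [show 2 * π * Complex.I * (S * m) / p = π * Complex.I * m * (2 * S) / p by ring, hSC]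
    field_simp
  have hfull : ZMod.stdAddChar (m : ZMod p) = w * w := by
    rw [← Complex.exp_add, show (m : ZMod p) = ((m : ℤ) : ZMod p) by push_cast; rfl,
      ZMod.stdAddChar_coe]
    congr 1
    push_cast
    ring
  have hsin : Complex.sin (π * m / p) = (w⁻¹ - w) * Complex.I / 2 := by
    rw [Complex.sin, neg_mul, Complex.exp_neg]
  rw [sawtoothCoeff_mul_sub_sawtoothCoeff (ZMod.two_mul_natCast_eq_one hS), hhalf, hfull, hsin]
  by_cases hz : w⁻¹ - w = 0
  · -- `sin (π m / p) = 0`: both sides are junk values of division by zero.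
    have : 1 - w * w = 0 := by rw [← mul_inv_cancel₀ hw, ← mul_sub, hz, mul_zero]
    simp [hz, this]
  · have : 1 - w * w ≠ 0 := by
      rw [← mul_inv_cancel₀ hw, ← mul_sub]
      exact mul_ne_zero hw hz
    field_simp

theorem sawtoothCoeff_stdAddChar_neg_mul_mul_half_mul_sub {S : ℕ} (hS : 2 * S = p + 1) (q : ℤ)
    (m : ℕ) :
    sawtoothCoeff ZMod.stdAddChar (-((q : ZMod p) * (m : ZMod p))) *
        (sawtoothCoeff ZMod.stdAddChar ((S : ZMod p) * (m : ZMod p))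
          - sawtoothCoeff ZMod.stdAddChar (m : ZMod p))
      = ((-1 : ℝ) ^ m * (1 / Real.sin (π * m / p)) *
          (Real.cos (π * q * m / p) / Real.sin (π * q * m / p)) : ℝ) := by
  rw [sawtoothCoeff_stdAddChar_half_mul_sub hS m,
    show -((q : ZMod p) * (m : ZMod p)) = ((-(q * m) : ℤ) : ZMod p) by push_cast; ring,
    sawtoothCoeff_stdAddChar_intCast]
  push_cast
  rw [show (π : ℂ) * -(q * m) / p = -(π * q * m / p) by ring, Complex.cos_neg, Complex.sin_neg]
  linear_combination (-(-1) ^ m * Complex.cos (π * q * m / p) / Complex.sin (π * q * m / p)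
    / Complex.sin (π * m / p)) * Complex.I_sq

end Trigonometric

theorem stmt_8_general (p : ℕ) (q : ℤ) (hodd : Odd p) :
    dedekindRademacherSum q p
      = 1 / (4 * p) *
          ∑ ℓ ∈ Finset.Icc 1 (p - 1),
            (-1 : ℝ) ^ ℓ * (1 / Real.sin (Real.pi * ℓ / p)) *
              (Real.cos (Real.pi * q * ℓ / p) / Real.sin (Real.pi * q * ℓ / p)) := by
  have : NeZero p := ⟨hodd.pos.ne'⟩
  obtain ⟨S, hS⟩ : ∃ S : ℕ, 2 * S = p + 1 := ⟨(p + 1) / 2, by obtain ⟨n, rfl⟩ := hodd; omega⟩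
  apply Complex.ofReal_injective
  rw [dedekindRademacherSum_eq_sum_sawtoothCoeff (ZMod.isPrimitive_stdAddChar p)
      (ZMod.two_mul_natCast_eq_one hS), ZMod.sum_eq_sum_Icc (by simp),
    sum_congr rfl fun m _ => sawtoothCoeff_stdAddChar_neg_mul_mul_half_mul_sub hS q m]
  push_cast
  ring

/-- For odd positive `p` and `q` coprime to `p`:
`s(q,p;1/2,0) = (1/(4p)) ∑_{ℓ=1}^{p−1} (−1)^ℓ csc(πℓ/p) cot(πqℓ/p)`. -/
theorem stmt_8 (p : ℕ) (q : ℤ) (hp : 0 < p) (hodd : Odd p)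
    (hco : Int.gcd q (p : ℤ) = 1) :
    dedekindRademacherSum q p
      = 1 / (4 * p) *
          ∑ ℓ ∈ Finset.Icc 1 (p - 1),
            (-1 : ℝ) ^ ℓ * (1 / Real.sin (Real.pi * ℓ / p)) *
              (Real.cos (Real.pi * q * ℓ / p) / Real.sin (Real.pi * q * ℓ / p)) :=
  stmt_8_general p q hodd
end

section
/- Let a₁, …, aₙ be pairwise coprime integers aᵢ ≥ 2, s = ⌊(n−3)/2⌋, and for each integer e ≥ 0 define A_e = {(x₁,…,xₙ) ∈ ℤⁿ : 0 ≤ xᵢ < aᵢ, e + Σ xᵢ/aᵢ < (n−2−Σ1/aᵢ)/2} and B_e = {(x₁,…,xₙ) ∈ ℤⁿ : xᵢ ≥ 0, e + Σ xᵢ/aᵢ < (n−2−Σ1/aᵢ)/2}. Then |B_{s−p}| = Σ_{k=0}^{p} binomial(n+p−k−1, n−1) · |A_{s−k}| for every 0 ≤ p ≤ s. -/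
/-!
Every `x ∈ ℕⁿ` splits uniquely as `x = y + q * a` with `yᵢ < aᵢ`, and then
`∑ xᵢ/aᵢ = ∑ yᵢ/aᵢ + ∑ qᵢ`. Sort the points of `B_{s-p}` by `j = ∑ qᵢ`, which is at most `p`
because the bound `(n - 2 - ∑ 1/aᵢ)/2` is at most `s + 1`. The points with a given `j`
correspond to a composition `q` of `j` into `n` parts, of which there are `C(n+j-1, n-1)`,
together with a point of `A_{s-p+j}`.
-/

open Finset

variable {ι : Type*} [Fintype ι]

theorem natCard_sum_eq_choose (m : ℕ) :
    Nat.card {q : ι → ℕ // ∑ i, q i = m} = (Fintype.card ι + m - 1).choose m := by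
  classical
  rw [← Nat.card_congr (Sym.equivNatSumOfFintype ι m), Sym.natCard_sym_eq_choose,
    Nat.card_eq_fintype_card]

instance (m : ℕ) : Finite {q : ι → ℕ // ∑ i, q i = m} := by
  classical exact .of_equiv _ (Sym.equivNatSumOfFintype ι m)

def pointsBelow (a : ι → ℕ) (t : ℚ) : Set (ι → ℕ) := {x | ∑ i, (x i : ℚ) / a i < t}

def latticeBox (a : ι → ℕ) : Set (ι → ℕ) := {x | ∀ i, x i < a i}

theorem latticeBox_finite (a : ι → ℕ) : (latticeBox a).Finite := by
  classical
  exact (Set.finite_Iic a).subset fun x hx i => (hx i).le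

variable {a : ι → ℕ}

theorem sum_cast_add_mul_div (ha : ∀ i, a i ≠ 0) (y q : ι → ℕ) :
    ∑ i, ((y + q * a) i : ℚ) / a i = ∑ i, (y i : ℚ) / a i + ∑ i, (q i : ℚ) := by
  rw [← sum_add_distrib]
  refine sum_congr rfl fun i _ => ?_
  have : (a i : ℚ) ≠ 0 := Nat.cast_ne_zero.mpr (ha i)
  simp only [Pi.add_apply, Pi.mul_apply, Nat.cast_add, Nat.cast_mul]
  field_simp

theorem add_mul_mem_pointsBelow_iff (ha : ∀ i, a i ≠ 0) (y q : ι → ℕ) (t : ℚ) :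
    y + q * a ∈ pointsBelow a t ↔ y ∈ pointsBelow a (t - ↑(∑ i, q i)) := by
  simp only [pointsBelow, Set.mem_ofPred_eq, sum_cast_add_mul_div ha, Nat.cast_sum,
    lt_sub_iff_add_lt]

theorem sum_div_le_of_mem_pointsBelow {p : ℕ} {t : ℚ} (ht : t ≤ p + 1) {x : ι → ℕ}
    (hx : x ∈ pointsBelow a t) : ∑ i, x i / a i ≤ p := by
  have : ((∑ i, x i / a i : ℕ) : ℚ) < p + 1 := calc
    _ ≤ ∑ i, (x i : ℚ) / a i := by
      push_cast
      exact sum_le_sum fun i _ => Nat.cast_div_le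
    _ < t := hx
    _ ≤ p + 1 := ht
  exact Nat.lt_succ_iff.mp (by exact_mod_cast this)

theorem ncard_pointsBelow (ha : ∀ i, a i ≠ 0) {p : ℕ} {t : ℚ} (ht : t ≤ p + 1) :
    (pointsBelow a t).ncard = ∑ j ∈ range (p + 1),
      (Fintype.card ι + j - 1).choose j * (latticeBox a ∩ pointsBelow a (t - j)).ncard := by
  let ψ : (Σ j : Fin (p + 1),
      {q : ι → ℕ // ∑ i, q i = j} × ↥(latticeBox a ∩ pointsBelow a (t - j))) → pointsBelow a t :=
    fun ⟨j, q, y⟩ =>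
      ⟨y.1 + q.1 * a, by
        rw [add_mul_mem_pointsBelow_iff ha, q.2]
        exact y.2.2⟩
  have hψ : Function.Bijective ψ := by
    constructor
    · rintro ⟨j₁, ⟨q₁, hq₁⟩, ⟨y₁, hy₁, _⟩⟩ ⟨j₂, ⟨q₂, hq₂⟩, ⟨y₂, hy₂, _⟩⟩ h
      have hx : ∀ i, y₁ i + q₁ i * a i = y₂ i + q₂ i * a i := fun i =>
        congrFun (congrArg Subtype.val h) i
      obtain rfl : y₁ = y₂ := funext fun i => by
        have := congrArg (· % a i) (hx i)
        simpa [Nat.mod_eq_of_lt (hy₁ i), Nat.mod_eq_of_lt (hy₂ i)] using this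
      obtain rfl : q₁ = q₂ := funext fun i => by
        simpa [ha i] using hx i
      obtain rfl : j₁ = j₂ := Fin.ext (hq₁.symm.trans hq₂)
      rfl
    · rintro ⟨x, hx⟩
      have hdecomp : (fun i => x i % a i) + (fun i => x i / a i) * a = x :=
        funext fun i => Nat.mod_add_div' (x i) (a i)
      refine ⟨⟨⟨∑ i, x i / a i, Nat.lt_succ_of_le (sum_div_le_of_mem_pointsBelow ht hx)⟩,
        ⟨fun i => x i / a i, rfl⟩,
        ⟨fun i => x i % a i, fun i => Nat.mod_lt _ (Nat.pos_of_ne_zero (ha i)), ?_⟩⟩,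
        Subtype.ext hdecomp⟩
      exact (add_mul_mem_pointsBelow_iff ha _ _ t).mp (by rwa [hdecomp])
  have : ∀ j : ℚ, Finite ↥(latticeBox a ∩ pointsBelow a j) := fun j =>
    ((latticeBox_finite a).subset Set.inter_subset_left).to_subtype
  rw [← Nat.card_coe_set_eq, ← Nat.card_eq_of_bijective ψ hψ, Nat.card_sigma,
    ← Fin.sum_univ_eq_sum_range]
  simp only [Nat.card_prod, natCard_sum_eq_choose, Nat.card_coe_set_eq]

theorem stmt_12_general (n : ℕ) (hn : 3 ≤ n) (a : Fin n → ℕ) (ha : ∀ i, 2 ≤ a i) (p : ℕ)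
    (hp : p ≤ (n - 3) / 2) :
    {x : Fin n → ℕ |
        (((n - 3) / 2 - p : ℕ) : ℚ) + ∑ i, (x i : ℚ) / (a i)
          < ((n : ℚ) - 2 - ∑ i, (1 : ℚ) / (a i)) / 2}.ncard
      = ∑ k ∈ Finset.range (p + 1),
          (n + p - k - 1).choose (n - 1) *
            {x : Fin n → ℕ | (∀ i, x i < a i) ∧
              (((n - 3) / 2 - k : ℕ) : ℚ) + ∑ i, (x i : ℚ) / (a i)
                < ((n : ℚ) - 2 - ∑ i, (1 : ℚ) / (a i)) / 2}.ncard := by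
  set s := (n - 3) / 2
  set c : ℚ := ((n : ℚ) - 2 - ∑ i, (1 : ℚ) / (a i)) / 2 with hc_def
  have hc : c ≤ s + 1 := by
    rw [hc_def]
    have : (n : ℚ) ≤ 2 * s + 4 := by exact_mod_cast (by omega : n ≤ 2 * s + 4)
    have : (0 : ℚ) ≤ ∑ i, (1 : ℚ) / a i := by positivity
    linarith
  have hB : ∀ e : ℕ, {x : Fin n → ℕ | (e : ℚ) + ∑ i, (x i : ℚ) / a i < c}
      = pointsBelow a (c - e) := fun e => by
    ext x
    simp only [pointsBelow, Set.mem_ofPred_eq, lt_sub_iff_add_lt']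
  have hA : ∀ e : ℕ, {x : Fin n → ℕ | (∀ i, x i < a i) ∧ (e : ℚ) + ∑ i, (x i : ℚ) / a i < c}
      = latticeBox a ∩ pointsBelow a (c - e) := fun e => by
    ext x
    simp only [latticeBox, pointsBelow, Set.mem_inter_iff, Set.mem_ofPred_eq,
      lt_sub_iff_add_lt']
  simp only [hB, hA]
  rw [ncard_pointsBelow (p := p) (fun i => by have := ha i; omega) (by push_cast [hp]; linarith)]
  conv_rhs => rw [← sum_range_reflect]
  refine sum_congr rfl fun j hj => ?_
  have hjp : j ≤ p := Nat.lt_succ_iff.mp (mem_range.mp hj)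
  rw [Fintype.card_fin, Nat.choose_symm_of_eq_add (by omega : n + j - 1 = j + (n - 1))]
  congr 4
  · omega
  · push_cast [hp, hjp, (by omega : p - j ≤ s)]
    ring

/-- With `s = ⌊(n−3)/2⌋`, `A_e` the restricted and `B_e` the unrestricted
lattice-point sets, `|B_{s−p}| = ∑_{k=0}^{p} C(n+p−k−1, n−1)·|A_{s−k}|`
for every `0 ≤ p ≤ s`. -/
theorem stmt_12 (n : ℕ) (hn : 3 ≤ n) (a : Fin n → ℕ) (ha : ∀ i, 2 ≤ a i)
    (hco : ∀ i j, i ≠ j → Nat.Coprime (a i) (a j)) (p : ℕ)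
    (hp : p ≤ (n - 3) / 2) :
    {x : Fin n → ℕ |
        (((n - 3) / 2 - p : ℕ) : ℚ) + ∑ i, (x i : ℚ) / (a i)
          < ((n : ℚ) - 2 - ∑ i, (1 : ℚ) / (a i)) / 2}.ncard
      = ∑ k ∈ Finset.range (p + 1),
          (n + p - k - 1).choose (n - 1) *
            {x : Fin n → ℕ | (∀ i, x i < a i) ∧
              (((n - 3) / 2 - k : ℕ) : ℚ) + ∑ i, (x i : ℚ) / (a i)
                < ((n : ℚ) - 2 - ∑ i, (1 : ℚ) / (a i)) / 2}.ncard :=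
  stmt_12_general n hn a ha p hp
end

section
/- Let a₁, …, aₙ be pairwise coprime integers aᵢ ≥ 2 and s = ⌊(n−3)/2⌋. With A_e and B_e as in the lattice-point setup, Σ_{e=0}^{s} (e+1)|A_e| = Σ_{e=0}^{s} (−1)^e · binomial(n−2, e) · |B_e|. -/
/-!
Writing each coordinate as `xᵢ = aᵢ qᵢ + rᵢ` with `0 ≤ rᵢ < aᵢ` turns `Σ xᵢ/aᵢ` into
`Σ qᵢ + Σ rᵢ/aᵢ`, so a point of `B_e` is a point of some `A_{e+k}` together with a tuple `q` of
sum `k`, and `|B_e| = Σ_k multichoose(n, k) |A_{e+k}|`. Substituting this into the right-hand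
side and exchanging the sums, the coefficient of `|A_m|` is the coefficient of `X^m` in
`(1 - X)^(n-2) (1 - X)^(-n) = (1 - X)^(-2)`, which is `m + 1`.
-/

open Finset PowerSeries

theorem coeff_one_sub_X_pow (N p : ℕ) :
    coeff p ((1 - X : ℤ⟦X⟧) ^ N) = (-1) ^ p * N.choose p := by
  have h : (1 - X : ℤ⟦X⟧) ^ N = rescale (-1) ((1 + Polynomial.X) ^ N : Polynomial ℤ) := by
    simp [rescale_X, sub_eq_add_neg]
  rw [h, coeff_rescale, Polynomial.coeff_coe, Polynomial.coeff_one_add_X_pow]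

theorem sum_neg_one_pow_mul_choose_mul_multichoose (N m : ℕ) :
    ∑ e ∈ range (m + 1), (-1 : ℤ) ^ e * N.choose e * (N + 2).multichoose (m - e) = m + 1 := by
  have h := congrArg (coeff m)
    (one_sub_pow_mul_invOneSubPow_val_add_eq_invOneSubPow_val ℤ 2 N)
  rw [add_comm 2 N, coeff_mul, Finset.Nat.sum_antidiagonal_eq_sum_range_succ_mk,
    invOneSubPow_val_succ_eq_mk_add_choose, invOneSubPow_val_succ_eq_mk_add_choose] at h
  simp only [coeff_one_sub_X_pow, coeff_mk, Nat.choose_one_right] at h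
  rw [Nat.cast_add, Nat.cast_one, add_comm (1 : ℤ)] at h
  rw [← h]
  refine sum_congr rfl fun e _ => ?_
  rw [Nat.multichoose_eq, show N + 2 + (m - e) - 1 = N + 1 + (m - e) by omega,
    Nat.choose_symm_add]

theorem sum_succ_mul_eq_sum_neg_one_pow_mul_choose_mul (N S : ℕ) (α β : ℕ → ℤ)
    (hβ : ∀ e ≤ S, β e = ∑ k ∈ range (S + 1 - e), ((N + 2).multichoose k : ℤ) * α (e + k)) :
    ∑ m ∈ range (S + 1), ((m : ℤ) + 1) * α m
      = ∑ e ∈ range (S + 1), (-1) ^ e * N.choose e * β e := by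
  calc ∑ m ∈ range (S + 1), ((m : ℤ) + 1) * α m
      = ∑ m ∈ Ico 0 (S + 1), ∑ e ∈ Ico 0 (m + 1),
          (-1) ^ e * N.choose e * (N + 2).multichoose (m - e) * α m := by
        simp_rw [← range_eq_Ico, ← sum_mul, sum_neg_one_pow_mul_choose_mul_multichoose]
    _ = ∑ e ∈ Ico 0 (S + 1), ∑ m ∈ Ico e (S + 1),
          (-1) ^ e * N.choose e * (N + 2).multichoose (m - e) * α m :=
        (sum_Ico_Ico_comm 0 (S + 1) _).symm
    _ = ∑ e ∈ range (S + 1), (-1) ^ e * N.choose e * β e := by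
        rw [← range_eq_Ico]
        refine sum_congr rfl fun e he => ?_
        rw [hβ e (Nat.lt_succ_iff.1 (mem_range.1 he)), sum_Ico_eq_sum_range, mul_sum]
        simp_rw [Nat.add_sub_cancel_left, mul_assoc]

theorem card_piAntidiag_univ (ι : Type*) [Fintype ι] [DecidableEq ι] (k : ℕ) :
    #(piAntidiag (univ : Finset ι) k) = (Fintype.card ι).multichoose k := by
  rw [← map_sym_eq_piAntidiag, card_map, sym_univ, card_univ, Sym.card_sym_eq_multichoose]

theorem sum_mul_add_div {ι : Type*} [Fintype ι] {a : ι → ℕ} (ha : ∀ i, a i ≠ 0)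
    (q r : ι → ℕ) :
    ∑ i, ((a i * q i + r i : ℕ) : ℚ) / a i = ∑ i, q i + ∑ i, (r i : ℚ) / a i := by
  push_cast
  rw [← sum_add_distrib]
  refine sum_congr rfl fun i _ => ?_
  have : (a i : ℚ) ≠ 0 := by exact_mod_cast ha i
  field_simp

section BoxBelow

variable {ι : Type*} [Fintype ι] [DecidableEq ι]

def boxBelow (a : ι → ℕ) (t : ℚ) : Finset (ι → ℕ) :=
  {x ∈ Fintype.piFinset fun i => range (a i) | ∑ i, (x i : ℚ) / a i < t}

variable {a : ι → ℕ}

theorem mem_boxBelow {t : ℚ} {x : ι → ℕ} :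
    x ∈ boxBelow a t ↔ (∀ i, x i < a i) ∧ ∑ i, (x i : ℚ) / a i < t := by
  simp [boxBelow]

theorem coe_boxBelow (t : ℚ) :
    (boxBelow a t : Set (ι → ℕ)) = {x | (∀ i, x i < a i) ∧ ∑ i, (x i : ℚ) / a i < t} :=
  Set.ext fun _ => mem_boxBelow

theorem ncard_setOf_sum_div_lt (ha : ∀ i, a i ≠ 0) {t : ℚ} {K : ℕ} (hK : t ≤ K) :
    {x : ι → ℕ | ∑ i, (x i : ℚ) / a i < t}.ncard
      = ∑ k ∈ range K, (Fintype.card ι).multichoose k * #(boxBelow a (t - k)) := by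
  let f : (Σ _ : ℕ, (ι → ℕ) × (ι → ℕ)) → ι → ℕ := fun p i => a i * p.2.1 i + p.2.2 i
  let s := (range K).sigma fun k => piAntidiag (univ : Finset ι) k ×ˢ boxBelow a (t - k)
  have mem_s {k : ℕ} {q r : ι → ℕ} : ⟨k, q, r⟩ ∈ s ↔
      k < K ∧ ∑ i, q i = k ∧ (∀ i, r i < a i) ∧ ∑ i, (r i : ℚ) / a i < t - k := by
    simp [s, mem_boxBelow]
  have hset : {x : ι → ℕ | ∑ i, (x i : ℚ) / a i < t} = f '' s := by
    ext x
    constructor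
    · intro hx
      have hsplit := sum_mul_add_div ha (fun i => x i / a i) (fun i => x i % a i)
      simp only [Nat.div_add_mod] at hsplit
      have hrem : 0 ≤ ∑ i, ((x i % a i : ℕ) : ℚ) / a i := by positivity
      refine ⟨⟨∑ i, x i / a i, fun i => x i / a i, fun i => x i % a i⟩,
        mem_s.2 ⟨?_, rfl, fun i => Nat.mod_lt _ (Nat.pos_of_ne_zero (ha i)), ?_⟩,
        funext fun i => Nat.div_add_mod (x i) (a i)⟩
      · exact_mod_cast (show ((∑ i, x i / a i : ℕ) : ℚ) < K by linarith [hx.out])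
      · linarith [hx.out]
    · rintro ⟨⟨k, q, r⟩, hp, rfl⟩
      obtain ⟨-, rfl, -, hr⟩ := mem_s.1 hp
      simp only [Set.mem_ofPred_eq, f, sum_mul_add_div ha]
      push_cast at hr ⊢
      linarith
  have hinj : Set.InjOn f s := by
    rintro ⟨k, q, r⟩ hp ⟨k', q', r'⟩ hp' h
    obtain ⟨-, rfl, hr, -⟩ := mem_s.1 hp
    obtain ⟨-, rfl, hr', -⟩ := mem_s.1 hp'
    have hqr (i : ι) : q i = q' i ∧ r i = r' i := by
      have ha_pos := Nat.pos_of_ne_zero (ha i)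
      obtain ⟨hq, hr⟩ := (Nat.div_mod_unique ha_pos).2 ⟨add_comm (r i) _, hr i⟩
      obtain ⟨hq', hr'⟩ := (Nat.div_mod_unique ha_pos).2
        ⟨(add_comm (r' i) _).trans (congrFun h i).symm, hr' i⟩
      exact ⟨hq.symm.trans hq', hr.symm.trans hr'⟩
    obtain rfl : q = q' := funext fun i => (hqr i).1
    obtain rfl : r = r' := funext fun i => (hqr i).2
    rfl
  rw [hset, hinj.ncard_image, Set.ncard_coe_finset, card_sigma]
  simp [card_product, card_piAntidiag_univ]

end BoxBelow

theorem stmt_13_general (n : ℕ) (hn : 3 ≤ n) (a : Fin n → ℕ) (ha : ∀ i, 2 ≤ a i) :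
    ∑ e ∈ Finset.range ((n - 3) / 2 + 1),
        ((e : ℤ) + 1) *
          ({x : Fin n → ℕ | (∀ i, x i < a i) ∧
            (e : ℚ) + ∑ i, (x i : ℚ) / (a i)
              < ((n : ℚ) - 2 - ∑ i, (1 : ℚ) / (a i)) / 2}.ncard : ℤ)
      = ∑ e ∈ Finset.range ((n - 3) / 2 + 1),
          (-1 : ℤ) ^ e * (n - 2).choose e *
            ({x : Fin n → ℕ |
              (e : ℚ) + ∑ i, (x i : ℚ) / (a i)
                < ((n : ℚ) - 2 - ∑ i, (1 : ℚ) / (a i)) / 2}.ncard : ℤ) := by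
  set c : ℚ := ((n : ℚ) - 2 - ∑ i, (1 : ℚ) / (a i)) / 2 with hc
  set S := (n - 3) / 2
  have hcS : c ≤ S + 1 := by
    have : (n : ℚ) ≤ 2 * S + 4 := by exact_mod_cast (show n ≤ 2 * S + 4 by omega)
    have : 0 ≤ ∑ i, (1 : ℚ) / (a i) := by positivity
    rw [hc]
    linarith
  simp_rw [← lt_sub_iff_add_lt', ← coe_boxBelow, Set.ncard_coe_finset]
  obtain ⟨N, rfl⟩ : ∃ N, n = N + 2 := ⟨n - 2, by omega⟩
  refine sum_succ_mul_eq_sum_neg_one_pow_mul_choose_mul N S _ _ fun e he => ?_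
  rw [ncard_setOf_sum_div_lt (fun i => by have := ha i; omega) (K := S + 1 - e)
    (by push_cast [Nat.cast_sub (by omega : e ≤ S + 1)]; linarith), Fintype.card_fin]
  push_cast
  exact sum_congr rfl fun k _ => by rw [sub_sub]

/-- With `s = ⌊(n−3)/2⌋`, `A_e` the restricted and `B_e` the unrestricted
lattice-point sets,
`∑_{e=0}^{s} (e+1)|A_e| = ∑_{e=0}^{s} (−1)^e C(n−2, e) |B_e|`. -/
theorem stmt_13 (n : ℕ) (hn : 3 ≤ n) (a : Fin n → ℕ) (ha : ∀ i, 2 ≤ a i)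
    (hco : ∀ i j, i ≠ j → Nat.Coprime (a i) (a j)) :
    ∑ e ∈ Finset.range ((n - 3) / 2 + 1),
        ((e : ℤ) + 1) *
          ({x : Fin n → ℕ | (∀ i, x i < a i) ∧
            (e : ℚ) + ∑ i, (x i : ℚ) / (a i)
              < ((n : ℚ) - 2 - ∑ i, (1 : ℚ) / (a i)) / 2}.ncard : ℤ)
      = ∑ e ∈ Finset.range ((n - 3) / 2 + 1),
          (-1 : ℤ) ^ e * (n - 2).choose e *
            ({x : Fin n → ℕ |
              (e : ℚ) + ∑ i, (x i : ℚ) / (a i)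
                < ((n : ℚ) - 2 - ∑ i, (1 : ℚ) / (a i)) / 2}.ncard : ℤ) :=
  stmt_13_general n hn a ha
end

section
/- Let p, q be coprime positive integers, and let S_{p,q} = {ap+bq : a, b ∈ ℤ, a ≥ 0, b ≥ 0} be the numerical semigroup generated by p and q. For any integer 0 ≤ α < pq, the number of integers s ∉ S_{p,q} with s ≥ α equals the number of pairs (i,j) of integers with 0 < i < p, 0 < j < q and 1 + α/(pq) ≤ i/p + j/q < 2. -/
/-!
Sylvester's description of the gaps: for coprime `p, q`, the map `(i, j) ↦ i q + j p - p q` is a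
bijection from the pairs `0 < i < p`, `0 < j < q` with `i q + j p > p q` onto the gaps of
`S_{p,q}`. Injectivity is the Chinese remainder theorem. A gap `s` is reached by taking `j < q`
with `j p ≡ s (mod q)`: then `j p > s` (otherwise `s = j p + b q`), and `j p - s = k q` with
`0 < k < p`, so `i = p - k` works. Conversely, if `i q + j p = s + p q` and `s = a p + b q`, then
`a p ≤ s < j p`, so `0 < j - a < q`, while `q ∣ (j - a) p`. Dividing by `p q`, the condition
`1 + α/(pq) ≤ i/p + j/q` becomes `s ≥ α`, and `i/p + j/q < 2` holds automatically.
-/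

theorem one_add_div_le_div_add_div_iff {p q : ℕ} (hp : 0 < p) (hq : 0 < q) (α i j : ℕ) :
    1 + (α : ℚ) / (p * q) ≤ (i : ℚ) / p + (j : ℚ) / q ↔ p * q + α ≤ i * q + j * p := by
  have hp' : (0 : ℚ) < p := by exact_mod_cast hp
  have hq' : (0 : ℚ) < q := by exact_mod_cast hq
  rw [one_add_div (by positivity), div_add_div _ _ hp'.ne' hq'.ne',
    div_le_div_iff_of_pos_right (by positivity)]
  norm_cast
  rw [mul_comm j p]

theorem div_add_div_lt_two {p q i j : ℕ} (hi : i < p) (hj : j < q) :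
    (i : ℚ) / p + (j : ℚ) / q < 2 := by
  have hi' : (i : ℚ) / p < 1 := (div_lt_one (by exact_mod_cast (by omega : 0 < p))).mpr
    (by exact_mod_cast hi)
  have hj' : (j : ℚ) / q < 1 := (div_lt_one (by exact_mod_cast (by omega : 0 < q))).mpr
    (by exact_mod_cast hj)
  linarith

namespace Nat.Coprime

variable {p q : ℕ}

theorem exists_lt_mul_modEq (hco : p.Coprime q) (hq : 0 < q) (s : ℕ) :
    ∃ j < q, j * p ≡ s [MOD q] := by
  have : NeZero q := ⟨hq.ne'⟩
  refine ⟨((s : ZMod q) * (p : ZMod q)⁻¹).val, ZMod.val_lt _, ?_⟩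
  rw [← ZMod.natCast_eq_natCast_iff]
  push_cast
  rw [ZMod.natCast_val, ZMod.cast_id, mul_assoc, mul_comm _ (p : ZMod q),
    ZMod.coe_mul_inv_eq_one p hco, mul_one]

theorem eq_of_mul_add_mul_eq (hco : p.Coprime q) {i i' j j' : ℕ} (hi : i < p) (hi' : i' < p)
    (h : i * q + j * p = i' * q + j' * p) : i = i' := by
  have hmod : i * q ≡ i' * q [MOD p] := by
    simpa only [Nat.ModEq, Nat.add_mul_mod_self_right] using congrArg (· % p) h
  simpa only [Nat.ModEq, Nat.mod_eq_of_lt hi, Nat.mod_eq_of_lt hi'] using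
    Nat.ModEq.cancel_right_of_coprime hco hmod

theorem injOn_mul_add_mul (hco : p.Coprime q) :
    Set.InjOn (fun ij : ℕ × ℕ => ij.1 * q + ij.2 * p) (Set.Iio p ×ˢ Set.Iio q) := by
  rintro ⟨i, j⟩ ⟨hi, hj⟩ ⟨i', j'⟩ ⟨hi', hj'⟩ h
  simp only at h hi hj hi' hj'
  obtain rfl := hco.eq_of_mul_add_mul_eq hi hi' h
  obtain rfl := hco.symm.eq_of_mul_add_mul_eq (j := i) (j' := i) hj hj' (by omega)
  rfl

theorem exists_mul_add_mul_eq_of_not_exists (hco : p.Coprime q) (hq : 0 < q) {s : ℕ}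
    (hs : ¬∃ a b : ℕ, s = a * p + b * q) :
    ∃ i j : ℕ, 0 < i ∧ i < p ∧ 0 < j ∧ j < q ∧ i * q + j * p = s + p * q := by
  obtain ⟨j, hj, hjs⟩ := hco.exists_lt_mul_modEq hq s
  have hsj : s < j * p := by
    by_contra! hle
    obtain ⟨b, hb⟩ := (Nat.modEq_iff_dvd' hle).mp hjs
    exact hs ⟨j, b, by rw [mul_comm b q]; omega⟩
  have hp : 0 < p := Nat.pos_of_ne_zero (by rintro rfl; simp at hsj)
  have hj0 : 0 < j := Nat.pos_of_ne_zero (by rintro rfl; simp at hsj)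
  obtain ⟨k, hk⟩ := (Nat.modEq_iff_dvd' hsj.le).mp hjs.symm
  have hkp : q * k < q * p := by
    calc q * k ≤ j * p := by omega
      _ < q * p := Nat.mul_lt_mul_of_pos_right hj hp
  have hk0 : 0 < k := Nat.pos_of_ne_zero (by rintro rfl; omega)
  have hkp' : k < p := Nat.lt_of_mul_lt_mul_left hkp
  refine ⟨p - k, j, by omega, by omega, by omega, hj, ?_⟩
  rw [Nat.sub_mul, mul_comm k q, mul_comm p q]
  have := Nat.mul_le_mul_left q hkp'.le
  omega

theorem not_exists_of_mul_add_mul_eq (hco : p.Coprime q) {i j s : ℕ} (hi : i < p) (hj : j < q)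
    (h : i * q + j * p = s + p * q) : ¬∃ a b : ℕ, s = a * p + b * q := by
  rintro ⟨a, b, rfl⟩
  have hiq : i * q < p * q := Nat.mul_lt_mul_of_pos_right hi (by omega)
  have hja : a < j := Nat.lt_of_mul_lt_mul_right (a := p) (by omega)
  have hdvd : q ∣ (j - a) * p := ⟨b + p - i, by
    rw [Nat.sub_mul, Nat.mul_sub, mul_add, mul_comm q b, mul_comm q p, mul_comm q i]
    have := Nat.mul_le_mul_right p hja.le
    omega⟩
  have := Nat.le_of_dvd (by omega) (hco.symm.dvd_of_dvd_mul_right hdvd)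
  omega

theorem not_exists_eq_mul_add_mul_iff (hco : p.Coprime q) (hq : 0 < q) (s : ℕ) :
    (¬∃ a b : ℕ, s = a * p + b * q) ↔
      ∃ i j : ℕ, 0 < i ∧ i < p ∧ 0 < j ∧ j < q ∧ i * q + j * p = s + p * q := by
  refine ⟨hco.exists_mul_add_mul_eq_of_not_exists hq, ?_⟩
  rintro ⟨i, j, -, hi, -, hj, h⟩
  exact hco.not_exists_of_mul_add_mul_eq hi hj h

theorem gaps_ge_eq_image (hco : p.Coprime q) (hq : 0 < q) (α : ℕ) :
    {s : ℕ | (¬∃ a b : ℕ, s = a * p + b * q) ∧ α ≤ s} =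
      (fun ij : ℕ × ℕ => ij.1 * q + ij.2 * p - p * q) ''
        {ij : ℕ × ℕ | 0 < ij.1 ∧ ij.1 < p ∧ 0 < ij.2 ∧ ij.2 < q ∧
          p * q + α ≤ ij.1 * q + ij.2 * p} := by
  ext s
  simp only [Set.mem_ofPred_eq, hco.not_exists_eq_mul_add_mul_iff hq, Set.mem_image, Prod.exists]
  constructor
  · rintro ⟨⟨i, j, hi0, hi, hj0, hj, h⟩, hαs⟩
    exact ⟨i, j, ⟨hi0, hi, hj0, hj, by omega⟩, by omega⟩
  · rintro ⟨i, j, ⟨hi0, hi, hj0, hj, hle⟩, rfl⟩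
    exact ⟨⟨i, j, hi0, hi, hj0, hj, by omega⟩, by omega⟩

end Nat.Coprime

theorem stmt_15_general (p q : ℕ) (hq : 0 < q) (hco : Nat.Coprime p q)
    (α : ℕ) :
    {s : ℕ | (¬∃ a b : ℕ, s = a * p + b * q) ∧ α ≤ s}.ncard
      = {ij : ℕ × ℕ | 0 < ij.1 ∧ ij.1 < p ∧ 0 < ij.2 ∧ ij.2 < q ∧
          1 + (α : ℚ) / (p * q) ≤ (ij.1 : ℚ) / p + (ij.2 : ℚ) / q ∧
          (ij.1 : ℚ) / p + (ij.2 : ℚ) / q < 2}.ncard := by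
  rw [hco.gaps_ge_eq_image hq, Set.InjOn.ncard_image]
  · congr 1
    ext ⟨i, j⟩
    simp only [Set.mem_ofPred_eq]
    constructor
    · rintro ⟨hi0, hi, hj0, hj, hle⟩
      exact ⟨hi0, hi, hj0, hj, (one_add_div_le_div_add_div_iff (by omega) hq α i j).mpr hle,
        div_add_div_lt_two hi hj⟩
    · rintro ⟨hi0, hi, hj0, hj, hle, -⟩
      exact ⟨hi0, hi, hj0, hj, (one_add_div_le_div_add_div_iff (by omega) hq α i j).mp hle⟩
  · rintro ⟨i, j⟩ ⟨-, hi, -, hj, hle⟩ ⟨i', j'⟩ ⟨-, hi', -, hj', hle'⟩ h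
    exact hco.injOn_mul_add_mul ⟨hi, hj⟩ ⟨hi', hj'⟩ (by simp only at h hle hle' ⊢; omega)

/-- For coprime positive `p, q` and `0 ≤ α < pq`, the number of gaps `s ∉ S_{p,q}`
with `s ≥ α` equals the number of pairs `0 < i < p`, `0 < j < q` with
`1 + α/(pq) ≤ i/p + j/q < 2`. -/
theorem stmt_15 (p q : ℕ) (hp : 0 < p) (hq : 0 < q) (hco : Nat.Coprime p q)
    (α : ℕ) (hα : α < p * q) :
    {s : ℕ | (¬∃ a b : ℕ, s = a * p + b * q) ∧ α ≤ s}.ncard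
      = {ij : ℕ × ℕ | 0 < ij.1 ∧ ij.1 < p ∧ 0 < ij.2 ∧ ij.2 < q ∧
          1 + (α : ℚ) / (p * q) ≤ (ij.1 : ℚ) / p + (ij.2 : ℚ) / q ∧
          (ij.1 : ℚ) / p + (ij.2 : ℚ) / q < 2}.ncard :=
  stmt_15_general p q hq hco α
end

section
/- Let a₁, …, aₙ be pairwise coprime positive integers, a = a₁⋯aₙ, and qᵢ = a/aᵢ. For any integer e ≥ 0, the number of nonnegative integer solutions (x₁,…,xₙ,x_{n+1}) of Σᵢ xᵢqᵢ + x_{n+1} = −ea + ⌊((n−2)a − Σᵢ qᵢ − 1)/2⌋ equals the number of nonnegative integer solutions (x₁,…,xₙ) of the inequality Σᵢ xᵢ/aᵢ < −e + (n − 2 − Σᵢ 1/aᵢ)/2. -/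
/-!
Multiplying the inequality by `a = ∏ aᵢ` turns it into the integer inequality
`2 ∑ xᵢqᵢ < −2ea + (n − 2)a − ∑ qᵢ`, i.e. `∑ xᵢqᵢ ≤ −ea + ⌊((n − 2)a − ∑ qᵢ − 1)/2⌋`;
each such `x` extends uniquely to a solution of the equation by the slack `x_{n+1}`.
-/

theorem ncard_setOf_add_slack_eq {α : Type*} (f : α → ℤ) (R : ℤ) :
    {p : α × ℕ | f p.1 + p.2 = R}.ncard = {x | f x ≤ R}.ncard := by
  have himage : Prod.fst '' {p : α × ℕ | f p.1 + p.2 = R} = {x | f x ≤ R} := by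
    ext x
    refine ⟨?_, fun hx => ⟨(x, (R - f x).toNat), ?_, rfl⟩⟩
    · rintro ⟨⟨x, y⟩, hxy, rfl⟩
      simp only [Set.mem_ofPred_eq] at hxy ⊢
      omega
    · simp only [Set.mem_ofPred_eq] at hx ⊢
      omega
  rw [← himage, Set.InjOn.ncard_image]
  rintro ⟨x, y⟩ hxy ⟨x', y'⟩ hxy' (rfl : x = x')
  simp only [Set.mem_ofPred_eq] at hxy hxy'
  simp only [Prod.mk.injEq, true_and]
  omega

theorem Int.cast_lt_div_two_iff_le_floor {K : Type*} [Field K] [LinearOrder K]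
    [IsStrictOrderedRing K] [FloorRing K] (t k : ℤ) :
    (t : K) < k / 2 ↔ t ≤ ⌊((k : K) - 1) / 2⌋ := by
  rw [Int.le_floor, lt_div_iff₀ two_pos, le_div_iff₀ two_pos]
  norm_cast
  omega

theorem sum_div_mul_eq_sum_mul_natCast_div {K ι : Type*} [Field K] [CharZero K] [Fintype ι]
    (x : ι → K) {a : ι → ℕ} {A : ℕ} (h : ∀ i, a i ∣ A) :
    (∑ i, x i / a i) * A = ∑ i, x i * ((A / a i : ℕ) : K) := by
  rw [Finset.sum_mul]
  refine Finset.sum_congr rfl fun i _ => ?_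
  rw [Nat.cast_div_charZero (h i)]
  ring

theorem stmt_19_general (n : ℕ) (a : Fin n → ℕ) (ha : ∀ i, 0 < a i)
    (e : ℕ) :
    {xy : (Fin n → ℕ) × ℕ |
        (∑ i, (xy.1 i : ℤ) * ((∏ j, a j) / a i : ℕ)) + (xy.2 : ℤ)
          = -(e : ℤ) * (∏ j, a j : ℕ)
            + ⌊(((n : ℚ) - 2) * (∏ j, a j : ℕ)
                - (∑ i, (((∏ j, a j) / a i : ℕ) : ℚ)) - 1) / 2⌋}.ncard
      = {x : Fin n → ℕ |
          ∑ i, (x i : ℚ) / (a i)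
            < -(e : ℚ) + ((n : ℚ) - 2 - ∑ i, (1 : ℚ) / (a i)) / 2}.ncard := by
  set A := ∏ j, a j
  have hA : (0 : ℚ) < A := Nat.cast_pos.2 (Finset.prod_pos fun i _ => ha i)
  have hdvd : ∀ i, a i ∣ A := fun i => Finset.dvd_prod_of_mem a (Finset.mem_univ i)
  set s : (Fin n → ℕ) → ℤ := fun x => ∑ i, (x i : ℤ) * ((A / a i : ℕ) : ℤ) with hs
  set Q : ℤ := ∑ i, ((A / a i : ℕ) : ℤ) with hQ
  have hcond : ∀ x : Fin n → ℕ, ∑ i, (x i : ℚ) / (a i)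
      < -(e : ℚ) + ((n : ℚ) - 2 - ∑ i, (1 : ℚ) / (a i)) / 2 ↔
      s x ≤ -(e : ℤ) * A + ⌊(((n : ℚ) - 2) * A - Q - 1) / 2⌋ := by
    intro x
    have hx : (∑ i, (x i : ℚ) / a i) * A = s x := by
      rw [sum_div_mul_eq_sum_mul_natCast_div _ hdvd]
      simp only [hs, Int.cast_sum, Int.cast_mul, Int.cast_natCast]
    have hone : (∑ i, (1 : ℚ) / a i) * A = Q := by
      rw [sum_div_mul_eq_sum_mul_natCast_div _ hdvd]
      simp only [hQ, Int.cast_sum, Int.cast_natCast, one_mul]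
    have hfloor := Int.cast_lt_div_two_iff_le_floor (K := ℚ) (e * A + s x) ((n - 2) * A - Q)
    push_cast at hfloor
    rw [neg_mul, le_neg_add_iff_add_le, ← hfloor, ← mul_lt_mul_iff_of_pos_right hA, add_mul,
      div_mul_eq_mul_div, sub_mul, sub_mul, hx, hone]
    constructor <;> intro h <;> linarith
  have hQcast : ∑ i, ((A / a i : ℕ) : ℚ) = Q := by simp only [hQ, Int.cast_sum, Int.cast_natCast]
  rw [hQcast]
  exact (ncard_setOf_add_slack_eq s _).trans (congrArg Set.ncard (Set.ext fun x => (hcond x).symm))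

/-- For pairwise coprime positive `a₁, …, aₙ`, `a = a₁⋯aₙ`, `qᵢ = a/aᵢ`, and any
integer `e ≥ 0`, the number of nonnegative integer solutions `(x₁,…,xₙ,y)` of
`∑ xᵢqᵢ + y = −ea + ⌊((n−2)a − ∑ qᵢ − 1)/2⌋` equals the number of nonnegative
integer solutions `(x₁,…,xₙ)` of `∑ xᵢ/aᵢ < −e + (n − 2 − ∑ 1/aᵢ)/2`. -/
theorem stmt_19 (n : ℕ) (a : Fin n → ℕ) (ha : ∀ i, 0 < a i)
    (hco : ∀ i j, i ≠ j → Nat.Coprime (a i) (a j)) (e : ℕ) :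
    {xy : (Fin n → ℕ) × ℕ |
        (∑ i, (xy.1 i : ℤ) * ((∏ j, a j) / a i : ℕ)) + (xy.2 : ℤ)
          = -(e : ℤ) * (∏ j, a j : ℕ)
            + ⌊(((n : ℚ) - 2) * (∏ j, a j : ℕ)
                - (∑ i, (((∏ j, a j) / a i : ℕ) : ℚ)) - 1) / 2⌋}.ncard
      = {x : Fin n → ℕ |
          ∑ i, (x i : ℚ) / (a i)
            < -(e : ℚ) + ((n : ℚ) - 2 - ∑ i, (1 : ℚ) / (a i)) / 2}.ncard :=
  stmt_19_general n a ha e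
end
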